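/- arXiv:2509.13564 — 3 statements merged into one kernel-verified Lean document; each statement's English description precedes it below -/
import Mathlib

section
/- Let 0 < ν < 1, β = ν²/(1−ν²), γ = ν/(1−ν²), r_T, ρ_T, ρ_A > 0, R = r_T + ρ_T. Suppose τ ≥ 0 satisfies ν·τ ≤ ρ_T − ν·ρ_A/(1 − ν) (i.e., τ ≤ τ₁* := ρ_T/ν − ρ_A/(1−ν)). Then for every angle θ and every entry angle θ_A0, the Apollonius-circle center x_C = (R − ν·τ)·û(θ_A0) − β·ρ_A·û(θ) satisfies ‖x_C‖ ≥ r_T + γ·ρ_A. -/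
/-!
The centre `x_C` is `(R - ντ) û(θ_A0)` displaced by a vector of length `βρ_A`, so by the
reverse triangle inequality `‖x_C‖ ≥ R - ντ - βρ_A` whatever the angles. Since
`β + γ = ν / (1 - ν)`, the bound `‖x_C‖ ≥ r_T + γρ_A` is then exactly the hypothesis
`ντ ≤ ρ_T - νρ_A / (1 - ν)`.
-/

open Real

/-- Unit vector at angle `θ` in the Euclidean plane. -/
noncomputable def uhat (θ : ℝ) : EuclideanSpace ℝ (Fin 2) :=
  WithLp.toLp 2 ![Real.cos θ, Real.sin θ]

lemma norm_uhat (θ : ℝ) : ‖uhat θ‖ = 1 := by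
  rw [uhat, EuclideanSpace.norm_eq]
  simp [Fin.sum_univ_two]

lemma sub_abs_le_norm_smul_sub_smul {E : Type*} [SeminormedAddCommGroup E] [NormedSpace ℝ E]
    {u v : E} (hu : ‖u‖ = 1) (hv : ‖v‖ = 1) (a b : ℝ) :
    a - |b| ≤ ‖a • u - b • v‖ :=
  calc a - |b| ≤ ‖a • u‖ - ‖b • v‖ := by
        rw [norm_smul, norm_smul, hu, hv, mul_one, mul_one, Real.norm_eq_abs, Real.norm_eq_abs]
        exact sub_le_sub_right (le_abs_self a) _
    _ ≤ ‖a • u - b • v‖ := norm_sub_norm_le _ _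

lemma sq_div_one_sub_sq_add_div_one_sub_sq {ν : ℝ} (h1 : 1 - ν ≠ 0) (h2 : 1 + ν ≠ 0) :
    ν ^ 2 / (1 - ν ^ 2) + ν / (1 - ν ^ 2) = ν / (1 - ν) := by
  rw [show 1 - ν ^ 2 = (1 - ν) * (1 + ν) by ring]
  field_simp
  ring

theorem guarding_before_critical_time_tau1_general
    (ν r_T ρ_T ρ_A τ : ℝ) (hν0 : 0 < ν) (hν1 : ν < 1)
    (hρA : 0 < ρ_A)
    (R β γ : ℝ) (hR : R = r_T + ρ_T)
    (hβ : β = ν ^ 2 / (1 - ν ^ 2)) (hγ : γ = ν / (1 - ν ^ 2))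
    (hτ : ν * τ ≤ ρ_T - ν * ρ_A / (1 - ν)) :
    ∀ θ θ_A0 : ℝ,
      ‖((R - ν * τ) • uhat θ_A0 - (β * ρ_A) • uhat θ : EuclideanSpace ℝ (Fin 2))‖ ≥
        r_T + γ * ρ_A := by
  intro θ θ_A0
  have hβ0 : 0 ≤ β := by
    rw [hβ]
    exact div_nonneg (sq_nonneg ν) (by nlinarith)
  have hβγ : β * ρ_A + γ * ρ_A = ν * ρ_A / (1 - ν) := by
    rw [← add_mul, hβ, hγ, sq_div_one_sub_sq_add_div_one_sub_sq (by linarith) (by linarith),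
      div_mul_eq_mul_div]
  calc r_T + γ * ρ_A ≤ R - ν * τ - |β * ρ_A| := by
        rw [abs_of_nonneg (mul_nonneg hβ0 hρA.le), hR]
        linarith
    _ ≤ _ := sub_abs_le_norm_smul_sub_smul (norm_uhat θ_A0) (norm_uhat θ) _ _

/-- If engagement begins no later than the critical time `τ₁* = ρ_T/ν − ρ_A/(1−ν)`
(equivalently `ντ ≤ ρ_T − νρ_A/(1−ν)`), then for every engagement angle `θ` and every
entry angle `θ_A0`, the Apollonius-circle center `x_C = (R − ντ)û(θ_A0) − βρ_A û(θ)`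
satisfies `‖x_C‖ ≥ r_T + γρ_A`: guarding is guaranteed regardless of the angle. -/
theorem guarding_before_critical_time_tau1
    (ν r_T ρ_T ρ_A τ : ℝ) (hν0 : 0 < ν) (hν1 : ν < 1)
    (hrT : 0 < r_T) (hρT : 0 < ρ_T) (hρA : 0 < ρ_A)
    (R β γ : ℝ) (hR : R = r_T + ρ_T)
    (hβ : β = ν ^ 2 / (1 - ν ^ 2)) (hγ : γ = ν / (1 - ν ^ 2))
    (hτ0 : 0 ≤ τ) (hτ : ν * τ ≤ ρ_T - ν * ρ_A / (1 - ν)) :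
    ∀ θ θ_A0 : ℝ,
      ‖((R - ν * τ) • uhat θ_A0 - (β * ρ_A) • uhat θ : EuclideanSpace ℝ (Fin 2))‖ ≥
        r_T + γ * ρ_A :=
  guarding_before_critical_time_tau1_general ν r_T ρ_T ρ_A τ hν0 hν1 hρA R β γ hR hβ hγ hτ
end

section
/- Let 0 < ν < 1, β = ν²/(1−ν²), γ = ν/(1−ν²), r_T, ρ_T, ρ_A > 0, R = r_T + ρ_T. Fix τ with R − ν·τ > 0 and angles θ_A0, θ, and set x_C = (R − ν·τ)·û(θ_A0) − β·ρ_A·û(θ). Assume R − γ·ρ_A ≥ 0. Then ‖x_C‖ + γ·ρ_A ≤ R holds if and only if sin²((θ − θ_A0)/2) ≤ [(R − γ·ρ_A)² − (R − ν·τ − β·ρ_A)²] / [4·β·ρ_A·(R − ν·τ)]. -/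
open Real

lemma inner_uhat_uhat (θ₁ θ₂ : ℝ) : inner ℝ (uhat θ₁) (uhat θ₂) = cos (θ₂ - θ₁) := by
  simp [uhat, PiLp.inner_apply, Fin.sum_univ_two, cos_sub]

lemma norm_smul_uhat_sub_smul_uhat_sq (a b θ₁ θ₂ : ℝ) :
    ‖a • uhat θ₁ - b • uhat θ₂‖ ^ 2 = (a - b) ^ 2 + 4 * a * b * sin ((θ₂ - θ₁) / 2) ^ 2 := by
  have h_half : sin ((θ₂ - θ₁) / 2) ^ 2 = 1 / 2 - cos (θ₂ - θ₁) / 2 := by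
    rw [sin_sq_eq_half_sub, mul_div_cancel₀ _ two_ne_zero]
  rw [norm_sub_sq_real, norm_smul, norm_smul, real_inner_smul_left, real_inner_smul_right,
    inner_uhat_uhat, norm_uhat, norm_uhat, h_half, Real.norm_eq_abs, Real.norm_eq_abs]
  simp only [mul_one, sq_abs]
  ring

lemma norm_smul_uhat_sub_smul_uhat_le_iff {a b c : ℝ} (θ₁ θ₂ : ℝ) (ha : 0 < a) (hb : 0 < b)
    (hc : 0 ≤ c) :
    ‖a • uhat θ₁ - b • uhat θ₂‖ ≤ c ↔
      sin ((θ₂ - θ₁) / 2) ^ 2 ≤ (c ^ 2 - (a - b) ^ 2) / (4 * a * b) := by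
  rw [← sq_le_sq₀ (norm_nonneg _) hc, norm_smul_uhat_sub_smul_uhat_sq,
    le_div_iff₀ (by positivity)]
  constructor <;> intro h <;> linarith

theorem escape_prevention_condition_central_general
    (ν ρ_A τ θ_A0 θ : ℝ) (hν0 : 0 < ν) (hν1 : ν < 1)
    (hρA : 0 < ρ_A)
    (R β γ : ℝ)
    (hβ : β = ν ^ 2 / (1 - ν ^ 2))
    (hτ : 0 < R - ν * τ) (hRγ : 0 ≤ R - γ * ρ_A)
    (x_C : EuclideanSpace ℝ (Fin 2))
    (hxC : x_C = (R - ν * τ) • uhat θ_A0 - (β * ρ_A) • uhat θ) :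
    ‖x_C‖ + γ * ρ_A ≤ R ↔
      Real.sin ((θ - θ_A0) / 2) ^ 2 ≤
        ((R - γ * ρ_A) ^ 2 - (R - ν * τ - β * ρ_A) ^ 2) /
          (4 * β * ρ_A * (R - ν * τ)) := by
  have hβ_pos : 0 < β := by
    rw [hβ]
    exact div_pos (by positivity) (by nlinarith)
  rw [← le_sub_iff_add_le, hxC,
    norm_smul_uhat_sub_smul_uhat_le_iff θ_A0 θ hτ (mul_pos hβ_pos hρA) hRγ,
    show 4 * (R - ν * τ) * (β * ρ_A) = 4 * β * ρ_A * (R - ν * τ) by ring]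

/-- The Apollonius circle (center `x_C = (R − ντ)û(θ_A0) − βρ_A û(θ)`, radius `γρ_A`)
lies entirely inside the disk of radius `R = r_T + ρ_T`, i.e. `‖x_C‖ + γρ_A ≤ R`,
if and only if
`sin²((θ − θ_A0)/2) ≤ [(R − γρ_A)² − (R − ντ − βρ_A)²] / [4βρ_A(R − ντ)]`. -/
theorem escape_prevention_condition_central
    (ν r_T ρ_T ρ_A τ θ_A0 θ : ℝ) (hν0 : 0 < ν) (hν1 : ν < 1)
    (hrT : 0 < r_T) (hρT : 0 < ρ_T) (hρA : 0 < ρ_A)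
    (R β γ : ℝ) (hR : R = r_T + ρ_T)
    (hβ : β = ν ^ 2 / (1 - ν ^ 2)) (hγ : γ = ν / (1 - ν ^ 2))
    (hτ : 0 < R - ν * τ) (hRγ : 0 ≤ R - γ * ρ_A)
    (x_C : EuclideanSpace ℝ (Fin 2))
    (hxC : x_C = (R - ν * τ) • uhat θ_A0 - (β * ρ_A) • uhat θ) :
    ‖x_C‖ + γ * ρ_A ≤ R ↔
      Real.sin ((θ - θ_A0) / 2) ^ 2 ≤
        ((R - γ * ρ_A) ^ 2 - (R - ν * τ - β * ρ_A) ^ 2) /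
          (4 * β * ρ_A * (R - ν * τ)) :=
  escape_prevention_condition_central_general ν ρ_A τ θ_A0 θ hν0 hν1 hρA R β γ hβ hτ hRγ x_C hxC
end

section
/- Let 0 < ν < 1, β = ν²/(1−ν²), γ = ν/(1−ν²), r_T, ρ_T, ρ_A > 0, R = r_T + ρ_T. Suppose τ ≥ 0 satisfies ν·τ ≤ ν·ρ_A/(1 + ν) (i.e., τ ≤ τ₃* := ρ_A/(1+ν)). Then for every angle θ and every entry angle θ_A0, the Apollonius-circle center x_C = (R − ν·τ)·û(θ_A0) − β·ρ_A·û(θ) satisfies ‖x_C‖ + γ·ρ_A ≥ R. -/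
/-!
By the reverse triangle inequality `‖x_C‖ ≥ (R − ντ) − βρ_A`, and `γ − β = ν/(1+ν)`, so the
hypothesis `ντ ≤ νρ_A/(1+ν)` is exactly what makes `(R − ντ) − βρ_A + γρ_A ≥ R`.
-/

open Real

lemma sub_le_norm_smul_sub_smul {E : Type*} [SeminormedAddCommGroup E] [NormedSpace ℝ E]
    {u v : E} (hu : ‖u‖ = 1) (hv : ‖v‖ = 1) (a : ℝ) {b : ℝ} (hb : 0 ≤ b) :
    a - b ≤ ‖a • u - b • v‖ := by
  have h := norm_sub_norm_le (a • u) (b • v)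
  rw [norm_smul, norm_smul, hu, hv, mul_one, mul_one, Real.norm_of_nonneg hb] at h
  linarith [le_abs_self a, Real.norm_eq_abs a]

lemma sub_sq_div_one_sub_sq {ν : ℝ} (h₁ : ν ≠ 1) :
    (ν - ν ^ 2) / (1 - ν ^ 2) = ν / (1 + ν) := by
  have h₁' : 1 - ν ≠ 0 := sub_ne_zero.mpr h₁.symm
  rw [show 1 - ν ^ 2 = (1 + ν) * (1 - ν) by ring, show ν - ν ^ 2 = ν * (1 - ν) by ring,
    mul_div_mul_right _ _ h₁']

theorem escape_before_critical_time_tau3_general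
    (ν ρ_A τ : ℝ) (hν0 : 0 < ν) (hν1 : ν < 1)
    (hρA : 0 < ρ_A)
    (R β γ : ℝ)
    (hβ : β = ν ^ 2 / (1 - ν ^ 2)) (hγ : γ = ν / (1 - ν ^ 2))
    (hτ : ν * τ ≤ ν * ρ_A / (1 + ν)) :
    ∀ θ θ_A0 : ℝ,
      ‖((R - ν * τ) • uhat θ_A0 - (β * ρ_A) • uhat θ : EuclideanSpace ℝ (Fin 2))‖ +
        γ * ρ_A ≥ R := by
  intro θ θ_A0
  have hβ0 : 0 ≤ β := hβ ▸ div_nonneg (sq_nonneg ν) (by nlinarith)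
  have hgap : γ * ρ_A - β * ρ_A = ν * ρ_A / (1 + ν) := by
    rw [← sub_mul, hγ, hβ, ← sub_div, sub_sq_div_one_sub_sq hν1.ne,
      div_mul_eq_mul_div]
  have hnorm := sub_le_norm_smul_sub_smul (norm_uhat θ_A0) (norm_uhat θ) (R - ν * τ)
    (mul_nonneg hβ0 hρA.le)
  linarith

/-- If engagement begins no later than the critical time `τ₃* = ρ_A/(1+ν)`
(equivalently `ντ ≤ νρ_A/(1+ν)`), then for every engagement angle `θ` and every entry
angle `θ_A0`, the Apollonius-circle center `x_C = (R − ντ)û(θ_A0) − βρ_A û(θ)` satisfies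
`‖x_C‖ + γρ_A ≥ R`: the Apollonius circle extends beyond the disk of radius `R`, so
escape cannot be prevented, regardless of the engagement angle. -/
theorem escape_before_critical_time_tau3
    (ν r_T ρ_T ρ_A τ : ℝ) (hν0 : 0 < ν) (hν1 : ν < 1)
    (hrT : 0 < r_T) (hρT : 0 < ρ_T) (hρA : 0 < ρ_A)
    (R β γ : ℝ) (hR : R = r_T + ρ_T)
    (hβ : β = ν ^ 2 / (1 - ν ^ 2)) (hγ : γ = ν / (1 - ν ^ 2))
    (hτ0 : 0 ≤ τ) (hτ : ν * τ ≤ ν * ρ_A / (1 + ν)) :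
    ∀ θ θ_A0 : ℝ,
      ‖((R - ν * τ) • uhat θ_A0 - (β * ρ_A) • uhat θ : EuclideanSpace ℝ (Fin 2))‖ +
        γ * ρ_A ≥ R :=
  escape_before_critical_time_tau3_general ν ρ_A τ hν0 hν1 hρA R β γ hβ hγ hτ
end
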